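/- arXiv:1510.00897 — 6 statements merged into one kernel-verified Lean document; each statement's English description precedes it below -/
import Mathlib

section
/- Let A and U be unitary operators on a complex Hilbert space with A² = I and U² = I. Then for all real α, β, if the operator −αA + 2U − βI is not invertible, then the pair (α, β) lies in the set Ω = {(α, β) : ||α| − |β|| ≤ 2 and |α| + |β| ≥ 2}. -/
section Aux

variable {H : Type*} [NormedAddCommGroup H] [InnerProductSpace ℂ H] [CompleteSpace H]

lemma aux_norm_le_one {A : H →L[ℂ] H} (hA : A ∈ unitary (H →L[ℂ] H)) : ‖A‖ ≤ 1 := by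
  have h2 : ‖star A * A‖ = ‖A‖ * ‖A‖ := CStarRing.norm_star_mul_self
  rw [hA.1] at h2
  have h3 : ‖(1 : H →L[ℂ] H)‖ ≤ 1 := ContinuousLinearMap.norm_id_le
  nlinarith [norm_nonneg A]

end Aux

theorem stmt4 {H : Type*} [NormedAddCommGroup H] [InnerProductSpace ℂ H] [CompleteSpace H]
    (A U : H →L[ℂ] H) (hA : A ∈ unitary (H →L[ℂ] H)) (hU : U ∈ unitary (H →L[ℂ] H))
    (hA2 : A * A = 1) (hU2 : U * U = 1) :
    ∀ α β : ℝ, ¬ IsUnit (-(α : ℂ) • A + (2 : ℂ) • U - (β : ℂ) • 1) →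
      (α, β) ∈ {p : ℝ × ℝ | |(|p.1| - |p.2|)| ≤ 2 ∧ 2 ≤ |p.1| + |p.2|} := by
  intro α β hT
  by_contra hmem
  simp only [Set.mem_setOf_eq, not_and_or, not_le] at hmem
  apply hT
  have hnA : ‖A‖ ≤ 1 := aux_norm_le_one hA
  have hnU : ‖U‖ ≤ 1 := aux_norm_le_one hU
  have hn1 : ‖(1 : H →L[ℂ] H)‖ ≤ 1 := ContinuousLinearMap.norm_id_le
  set S : H →L[ℂ] H := (α : ℂ) • A + (β : ℂ) • 1 with hSdef
  have hTS : -(α : ℂ) • A + (2 : ℂ) • U - (β : ℂ) • 1 = (2 : ℂ) • U - S := by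
    rw [hSdef]; module
  rw [hTS]
  have hnS : ‖S‖ ≤ |α| + |β| := by
    calc ‖S‖ ≤ ‖(α : ℂ) • A‖ + ‖(β : ℂ) • 1‖ := norm_add_le _ _
    _ ≤ |α| * 1 + |β| * 1 := by
        rw [norm_smul, norm_smul, Complex.norm_real, Complex.norm_real,
          Real.norm_eq_abs, Real.norm_eq_abs]
        gcongr
    _ = |α| + |β| := by ring
  rcases hmem with h | h
  · -- case 2 < | |α| - |β| |
    set d : ℝ := |(|α| - |β|)| with hd
    set s : ℝ := |α| + |β| with hs
    have hds : 0 < s := by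
      have : d ≤ s := by
        rw [hd, hs]
        have := abs_sub_abs_le_abs_sub α β
        have h1 := abs_abs_sub_abs_le_abs_sub α β
        calc |(|α| - |β|)| ≤ |α - β| := h1
        _ ≤ |α| + |β| := abs_sub _ _
      linarith
    have habs : |α ^ 2 - β ^ 2| = d * s := by
      have h1 : α ^ 2 - β ^ 2 = (|α| - |β|) * (|α| + |β|) := by
        have := sq_abs α; have := sq_abs β; nlinarith
      rw [h1, abs_mul, abs_of_pos hds]
    set c : ℂ := (α : ℂ) ^ 2 - (β : ℂ) ^ 2 with hc
    have hnc : ‖c‖ = d * s := by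
      have : c = ((α ^ 2 - β ^ 2 : ℝ) : ℂ) := by push_cast [hc]; ring
      rw [this, Complex.norm_real, Real.norm_eq_abs, habs]
    have hc0 : c ≠ 0 := by
      intro h0
      rw [h0, norm_zero] at hnc
      nlinarith
    set D : H →L[ℂ] H := (α : ℂ) • A - (β : ℂ) • 1 with hDdef
    have hSD : S * D = c • 1 := by
      rw [hSdef, hDdef, hc]
      simp only [mul_sub, add_mul, smul_mul_smul_comm, hA2, mul_one, one_mul]
      module
    have hDS : D * S = c • 1 := by
      rw [hSdef, hDdef, hc]
      simp only [sub_mul, mul_add, smul_mul_smul_comm, hA2, mul_one, one_mul]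
      module
    set V : H →L[ℂ] H := c⁻¹ • D with hVdef
    have hSV : S * V = 1 := by
      rw [hVdef, mul_smul_comm, hSD, smul_smul, inv_mul_cancel₀ hc0, one_smul]
    have hVS : V * S = 1 := by
      rw [hVdef, smul_mul_assoc, hDS, smul_smul, inv_mul_cancel₀ hc0, one_smul]
    have hUnitS : IsUnit S := isUnit_iff_exists.2 ⟨V, hSV, hVS⟩
    have hnD : ‖D‖ ≤ s := by
      calc ‖D‖ ≤ ‖(α : ℂ) • A‖ + ‖(β : ℂ) • 1‖ := norm_sub_le _ _
      _ ≤ |α| * 1 + |β| * 1 := by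
          rw [norm_smul, norm_smul, Complex.norm_real, Complex.norm_real,
            Real.norm_eq_abs, Real.norm_eq_abs]
          gcongr
      _ = s := by rw [hs]; ring
    have hnV : ‖V‖ ≤ d⁻¹ := by
      rw [hVdef, norm_smul, norm_inv, hnc]
      have hdpos : (0:ℝ) < d := by linarith
      calc (d * s)⁻¹ * ‖D‖ ≤ (d * s)⁻¹ * s := by
            have : (0:ℝ) ≤ (d * s)⁻¹ := inv_nonneg.2 (le_of_lt (mul_pos hdpos hds))
            exact mul_le_mul_of_nonneg_left hnD this
      _ = d⁻¹ := by
            rw [mul_inv, mul_assoc, inv_mul_cancel₀ (ne_of_gt hds), mul_one]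
    have hlt : ‖V * ((2 : ℂ) • U)‖ < 1 := by
      have h2U : ‖(2 : ℂ) • U‖ ≤ 2 := by
        rw [norm_smul]
        have h2 : ‖(2 : ℂ)‖ = 2 := by norm_num
        rw [h2]
        nlinarith [norm_nonneg U]
      calc ‖V * ((2 : ℂ) • U)‖ ≤ ‖V‖ * ‖(2 : ℂ) • U‖ := norm_mul_le _ _
      _ ≤ d⁻¹ * 2 := by
          have h1 : (0:ℝ) ≤ ‖(2 : ℂ) • U‖ := norm_nonneg _
          have h2 : (0:ℝ) ≤ d⁻¹ := inv_nonneg.2 (by linarith)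
          nlinarith [norm_nonneg V]
      _ < 1 := by
          rw [← div_eq_inv_mul]
          rw [div_lt_one (by linarith)]
          linarith
    have key : (2 : ℂ) • U - S = S * (V * ((2 : ℂ) • U) - 1) := by
      rw [mul_sub, ← mul_assoc, hSV, one_mul, mul_one]
    rw [key]
    refine hUnitS.mul ?_
    rw [← neg_sub]
    exact ((Units.oneSub _ hlt).isUnit).neg
  · -- case |α| + |β| < 2
    have hUnit2U : IsUnit ((2 : ℂ) • U) := by
      refine isUnit_iff_exists.2 ⟨(2⁻¹ : ℂ) • U, ?_, ?_⟩ <;>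
        rw [smul_mul_smul_comm, hU2] <;> norm_num
    have key : (2 : ℂ) • U - S = ((2 : ℂ) • U) * (1 - (2⁻¹ : ℂ) • (U * S)) := by
      rw [mul_sub, mul_one, smul_mul_smul_comm, ← mul_assoc, hU2, one_mul]
      norm_num
    have hlt : ‖(2⁻¹ : ℂ) • (U * S)‖ < 1 := by
      rw [norm_smul]
      have hUS : ‖U * S‖ ≤ |α| + |β| := by
        calc ‖U * S‖ ≤ ‖U‖ * ‖S‖ := norm_mul_le _ _
        _ ≤ 1 * (|α| + |β|) := by
            have h1 : (0:ℝ) ≤ ‖S‖ := norm_nonneg _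
            nlinarith [norm_nonneg U]
        _ = |α| + |β| := one_mul _
      have h2 : ‖(2⁻¹ : ℂ)‖ = 2⁻¹ := by norm_num
      rw [h2]
      nlinarith [norm_nonneg (U * S)]
    rw [key]
    exact hUnit2U.mul ((Units.oneSub _ hlt).isUnit)
end

section
/- Let T be a measure class preserving invertible transformation of a standard probability space (X, μ) (i.e., T is a measurable bijection with measurable inverse such that μ∘T and μ are mutually absolutely continuous). Suppose A ⊆ X is measurable with μ(A) > 0 and Tx ≠ x for μ-almost all x ∈ A. Then there exists a measurable subset B ⊆ A with μ(B) > 0 such that μ(B ∩ T(B)) = 0. -/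
open MeasureTheory

theorem stmt5 {X : Type*} [MeasurableSpace X] [StandardBorelSpace X]
    (μ : Measure X) [IsProbabilityMeasure μ]
    (T : X ≃ᵐ X)
    (hac : μ.map T ≪ μ) (hac' : μ ≪ μ.map T)
    (A : Set X) (hA : MeasurableSet A) (hApos : 0 < μ A)
    (hfix : ∀ᵐ x ∂(μ.restrict A), T x ≠ x) :
    ∃ B : Set X, MeasurableSet B ∧ B ⊆ A ∧ 0 < μ B ∧ μ (B ∩ T '' B) = 0 := by
  obtain ⟨S, hScount, hSmeas, hSsep⟩ :=
    exists_countable_separating X MeasurableSet Set.univ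
  -- enlarge S by complements
  set F : Set (Set X) := S ∪ (compl '' S) with hF
  have hFcount : F.Countable := hScount.union (hScount.image _)
  have hFmeas : ∀ s ∈ F, MeasurableSet s := by
    rintro s (hs | ⟨t, ht, rfl⟩)
    · exact hSmeas s hs
    · exact (hSmeas t ht).compl
  -- candidate sets
  set f : Set X → Set X := fun s => A ∩ s ∩ T ⁻¹' sᶜ with hf
  by_cases hpos : ∃ s ∈ F, 0 < μ (f s)
  · obtain ⟨s, hsF, hspos⟩ := hpos
    refine ⟨f s, ((hA.inter (hFmeas s hsF)).inter
      ((hFmeas s hsF).compl.preimage T.measurable)), fun x hx => hx.1.1, hspos, ?_⟩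
    have : f s ∩ T '' f s = ∅ := by
      ext y
      simp only [Set.mem_inter_iff, Set.mem_image, Set.mem_empty_iff_false, iff_false]
      rintro ⟨hy, x, hx, rfl⟩
      exact hx.2 hy.1.2
    rw [this]; simp
  · exfalso
    push_neg at hpos
    have hN : μ (⋃ s ∈ F, f s) = 0 :=
      measure_biUnion_null_iff hFcount |>.2 fun s hs => le_antisymm (hpos s hs) bot_le
    have hsub : A ⊆ {x | T x = x} ∪ ⋃ s ∈ F, f s := by
      intro x hxA
      by_cases hx : T x = x
      · exact Or.inl hx
      · right
        have : ¬ ∀ s ∈ S, x ∈ s ↔ T x ∈ s := fun h =>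
          hx (hSsep (T x) trivial x trivial (fun s hs => (h s hs).symm))
        push_neg at this
        obtain ⟨s, hsS, hiff⟩ := this
        rcases hiff with h1 | h2
        · exact Set.mem_biUnion (Set.mem_union_left _ hsS) ⟨⟨hxA, h1.1⟩, h1.2⟩
        · refine Set.mem_biUnion (Set.mem_union_right _ ⟨s, hsS, rfl⟩) ⟨⟨hxA, h2.1⟩, ?_⟩
          simpa using h2.2
    have hfix0 : μ.restrict A {x | T x = x} = 0 := by
      have := hfix
      rw [ae_iff] at this
      simpa using this
    have : μ A ≤ 0 := by
      calc μ A = μ.restrict A A := by rw [Measure.restrict_apply_self]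
        _ ≤ μ.restrict A ({x | T x = x} ∪ ⋃ s ∈ F, f s) := measure_mono hsub
        _ ≤ μ.restrict A {x | T x = x} + μ.restrict A (⋃ s ∈ F, f s) := measure_union_le _ _
        _ ≤ 0 + μ (⋃ s ∈ F, f s) := by
            rw [hfix0]; exact add_le_add le_rfl (Measure.restrict_le_self _)
        _ = 0 := by rw [hN, add_zero]
    exact absurd (le_antisymm this bot_le) hApos.ne'
end

section
/- For the Möbius map h(z) = 4z/(2 − z) on the reals, for every real z with z ≠ 0 and such that the forward orbit h^n(z) is defined for all n (avoids the pole at 2), the sequence h^n(z) converges to −2. -/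
/-! In the coordinate `v = 1 + 2 / w` the map `w ↦ 4w/(2 - w)` becomes `v ↦ v / 2`, which sends the
fixed point `-2` to `0` and the other fixed point `0` to infinity. Along an orbit avoiding `0`
the coordinate is therefore `v₀ / 2ⁿ → 0`, and `w = 2 / (v - 1) → -2`. -/

open Filter Topology

noncomputable section

namespace Stmt7

def mobius (w : ℝ) : ℝ := 4 * w / (2 - w)

def coord (w : ℝ) : ℝ := 1 + 2 / w

lemma mobius_ne_zero {w : ℝ} (h0 : w ≠ 0) (h2 : w ≠ 2) : mobius w ≠ 0 :=
  div_ne_zero (mul_ne_zero four_ne_zero h0) (sub_ne_zero.mpr (Ne.symm h2))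

lemma coord_mobius {w : ℝ} (hw : w ≠ 0) : coord (mobius w) = coord w / 2 := by
  unfold coord mobius
  field_simp
  ring

lemma eq_two_div_coord_sub_one (w : ℝ) : w = 2 / (coord w - 1) := by
  simp [coord]

lemma iterate_mobius_ne_zero {z : ℝ} (hz : z ≠ 0) (h : ∀ k : ℕ, mobius^[k] z ≠ 2) (n : ℕ) :
    mobius^[n] z ≠ 0 := by
  induction n with
  | zero => exact hz
  | succ n ih =>
    rw [Function.iterate_succ_apply']
    exact mobius_ne_zero ih (h n)

lemma coord_iterate_mobius {z : ℝ} (h0 : ∀ n : ℕ, mobius^[n] z ≠ 0) (n : ℕ) :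
    coord (mobius^[n] z) = coord z / 2 ^ n := by
  induction n with
  | zero => simp
  | succ n ih =>
    rw [Function.iterate_succ_apply', coord_mobius (h0 n), ih, pow_succ, div_div]

lemma tendsto_two_div_div_two_pow_sub_one (c : ℝ) :
    Tendsto (fun n : ℕ => 2 / (c / 2 ^ n - 1)) atTop (𝓝 (-2)) := by
  have hc : Tendsto (fun n : ℕ => c / 2 ^ n) atTop (𝓝 0) :=
    tendsto_const_nhds.div_atTop (tendsto_pow_atTop_atTop_of_one_lt one_lt_two)
  have hlim := (tendsto_const_nhds (x := (2 : ℝ))).div (hc.sub_const 1) (by norm_num)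
  norm_num at hlim
  exact hlim

end Stmt7

end

open Stmt7 in
theorem stmt7 (z : ℝ) (hz : z ≠ 0)
    (h : ∀ k : ℕ, (fun w : ℝ => 4 * w / (2 - w))^[k] z ≠ 2) :
    Filter.Tendsto (fun n : ℕ => (fun w : ℝ => 4 * w / (2 - w))^[n] z)
      Filter.atTop (nhds (-2)) := by
  have h0 : ∀ n : ℕ, mobius^[n] z ≠ 0 := iterate_mobius_ne_zero hz h
  refine (tendsto_two_div_div_two_pow_sub_one (coord z)).congr fun n => ?_
  rw [← coord_iterate_mobius h0 n, ← eq_two_div_coord_sub_one]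
  rfl
end

section
/- Define F : ℝ² ∖ (ℝ × {±2}) → ℝ² by F(α, β) = (2α²/(4 − β²), β + α²β/(4 − β²)), and for natural numbers n and integers j define the curve γ_{n,j} = {(α, β) ∈ ℝ² : 4 − β² + α² − 4α·cos(2πj/2ⁿ) = 0}. Then for all n ≥ 1 and all j, if (α, β) ∈ γ_{n,j} and β ≠ ±2, then F(α, β) ∈ γ_{n−1,j}. -/
/-!
Write `d = 4 - β²` and `c = cos θ`, so that `(α, β)` lies on the curve with angle `θ` iff
`4αc = d + α²`. Multiplying the equation of the curve with angle `2θ` at `F(α, β)` by `d²`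
and using `cos 2θ = 2c² - 1`, `16α²c² = (d + α²)²` and `β² + d = 4`, it becomes
`4(d + α²)² - 4(d + α²)² = 0`. Halving the exponent `n` doubles the angle `2πj/2ⁿ`.
-/

theorem map_mem_curve_two_mul_sq_sub_one {α β c : ℝ} (hd : 4 - β ^ 2 ≠ 0)
    (h : 4 - β ^ 2 + α ^ 2 - 4 * α * c = 0) :
    4 - (β + α ^ 2 * β / (4 - β ^ 2)) ^ 2 + (2 * α ^ 2 / (4 - β ^ 2)) ^ 2 -
      4 * (2 * α ^ 2 / (4 - β ^ 2)) * (2 * c ^ 2 - 1) = 0 := by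
  field_simp
  linear_combination (4 - β ^ 2) * (4 * α * c + 4 - β ^ 2 + α ^ 2) * h

theorem div_two_pow_pred {n : ℕ} (hn : 1 ≤ n) (x : ℝ) : x / 2 ^ (n - 1) = 2 * (x / 2 ^ n) := by
  obtain ⟨k, rfl⟩ := Nat.exists_eq_add_of_le' hn
  rw [Nat.add_sub_cancel, pow_succ]
  field_simp

theorem stmt8 (n : ℕ) (hn : 1 ≤ n) (j : ℤ) (α β : ℝ)
    (hβ2 : β ≠ 2) (hβ2' : β ≠ -2)
    (hγ : 4 - β ^ 2 + α ^ 2 - 4 * α * Real.cos (2 * Real.pi * j / 2 ^ n) = 0) :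
    4 - (β + α ^ 2 * β / (4 - β ^ 2)) ^ 2 + (2 * α ^ 2 / (4 - β ^ 2)) ^ 2 -
      4 * (2 * α ^ 2 / (4 - β ^ 2)) * Real.cos (2 * Real.pi * j / 2 ^ (n - 1)) = 0 := by
  have hd : (4 : ℝ) - β ^ 2 ≠ 0 := by
    rw [show (4 : ℝ) - β ^ 2 = (2 - β) * (2 + β) by ring]
    exact mul_ne_zero (sub_ne_zero.mpr hβ2.symm) fun h => hβ2' (by linarith)
  rw [div_two_pow_pred hn, Real.cos_two_mul]
  exact map_mem_curve_two_mul_sq_sub_one hd hγ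
end

section
/- The union over all n ∈ ℕ and j ∈ ℤ of the curves γ_{n,j} = {(α, β) ∈ ℝ² : 4 − β² + α² − 4α·cos(2πj/2ⁿ) = 0} is dense in the region S = {(α, β) ∈ ℝ² : ||α| − |β|| ≤ 2 and |α| + |β| ≥ 2}. -/
/-!
A point (α, β) of S satisfies β² = α² − 4α cos θ + 4 = |α − 2e^{iθ}|² for some θ, by the
intermediate value theorem: β² lies between (|α| − 2)² and (|α| + 2)², the values at θ = 0 and
θ = π. Letting θ' run through dyadic multiples 2πj/2ⁿ of 2π, which are dense, the points
(α, ±√(α² − 4α cos θ' + 4)) lie on the curves and converge to (α, β).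
-/

open Real Set

theorem dense_setOf_mul_int_div_pow {c b : ℝ} (hc : 0 < c) (hb : 1 < b) :
    Dense {x : ℝ | ∃ (n : ℕ) (j : ℤ), x = c * j / b ^ n} := by
  refine dense_of_exists_between fun x y hxy => ?_
  obtain ⟨n, hn⟩ : ∃ n : ℕ, b⁻¹ ^ n < (y - x) / c :=
    exists_pow_lt_of_lt_one (div_pos (sub_pos.2 hxy) hc) (inv_lt_one_of_one_lt₀ hb)
  have hbn : 0 < b ^ n := by positivity
  set t := x * b ^ n / c
  have hlt_floor_add_one : t < ⌊t⌋ + 1 := Int.lt_floor_add_one t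
  have hfloor_le : (⌊t⌋ : ℝ) ≤ t := Int.floor_le t
  refine ⟨c * ↑(⌊t⌋ + 1) / b ^ n, ⟨n, _, rfl⟩, ?_, ?_⟩
  · rw [lt_div_iff₀ hbn, Int.cast_add, Int.cast_one]
    rw [div_lt_iff₀ hc] at hlt_floor_add_one
    linarith
  · rw [div_lt_iff₀ hbn, Int.cast_add, Int.cast_one]
    rw [inv_pow, lt_div_iff₀ hc, inv_mul_lt_iff₀ hbn] at hn
    have : c * t = x * b ^ n := mul_div_cancel₀ _ hc.ne'
    nlinarith

theorem sq_mem_uIcc_of_abs_abs_sub_abs_le {α β : ℝ} (hdiff : |(|α| - |β|)| ≤ 2)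
    (hsum : 2 ≤ |α| + |β|) : β ^ 2 ∈ uIcc ((α - 2) ^ 2) ((α + 2) ^ 2) := by
  obtain ⟨hlo, hhi⟩ := abs_le.1 hdiff
  have hβ := abs_nonneg β
  rw [mem_uIcc, ← sq_abs β]
  rcases le_total 0 α with hα | hα
  · rw [abs_of_nonneg hα] at *
    exact Or.inl ⟨by nlinarith, by nlinarith⟩
  · rw [abs_of_nonpos hα] at *
    exact Or.inr ⟨by nlinarith, by nlinarith⟩

theorem exists_sq_eq_sub_cos {α β : ℝ} (hdiff : |(|α| - |β|)| ≤ 2) (hsum : 2 ≤ |α| + |β|) :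
    ∃ θ, β ^ 2 = α ^ 2 - 4 * α * cos θ + 4 := by
  have hcont : ContinuousOn (fun θ => α ^ 2 - 4 * α * cos θ + 4) (uIcc 0 π) := by fun_prop
  obtain ⟨θ, -, hθ⟩ := intermediate_value_uIcc hcont (by
    convert sq_mem_uIcc_of_abs_abs_sub_abs_le hdiff hsum using 1
    simp only [cos_zero, cos_pi]; ring_nf)
  exact ⟨θ, hθ.symm⟩

def dyadicAngleCurves : Set (ℝ × ℝ) :=
  ⋃ (n : ℕ) (j : ℤ),
    {p : ℝ × ℝ | 4 - p.2 ^ 2 + p.1 ^ 2 - 4 * p.1 * cos (2 * π * j / 2 ^ n) = 0}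

theorem sq_sub_mul_cos_add_nonneg (α θ : ℝ) : 0 ≤ α ^ 2 - 4 * α * cos θ + 4 := by
  have : α ^ 2 - 4 * α * cos θ + 4 = (α - 2 * cos θ) ^ 2 + (2 * sin θ) ^ 2 := by
    linear_combination -4 * sin_sq_add_cos_sq θ
  rw [this]
  positivity

theorem mem_closure_dyadicAngleCurves {α β θ : ℝ} (h : β ^ 2 = α ^ 2 - 4 * α * cos θ + 4) :
    (α, β) ∈ closure dyadicAngleCurves := by
  obtain ⟨s, hs, hsβ⟩ : ∃ s : ℝ, s ^ 2 = 1 ∧ s * |β| = β := by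
    rcases le_total 0 β with hβ | hβ
    · exact ⟨1, by norm_num, by rw [one_mul, abs_of_nonneg hβ]⟩
    · exact ⟨-1, by norm_num, by rw [abs_of_nonpos hβ]; ring⟩
  let F : ℝ → ℝ × ℝ := fun t => (α, s * √(α ^ 2 - 4 * α * cos t + 4))
  have hF : Continuous F := by fun_prop
  have hFθ : F θ = (α, β) := by
    simp only [F, ← h, sqrt_sq_eq_abs, hsβ]
  have hF_dyadic : F '' {x | ∃ (n : ℕ) (j : ℤ), x = 2 * π * j / 2 ^ n} ⊆ dyadicAngleCurves := by
    rintro _ ⟨_, ⟨n, j, rfl⟩, rfl⟩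
    refine mem_iUnion₂.2 ⟨n, j, ?_⟩
    simp only [F, mem_ofPred_eq, mul_pow, hs, one_mul, sq_sqrt (sq_sub_mul_cos_add_nonneg _ _)]
    ring
  rw [← hFθ]
  exact closure_mono hF_dyadic <| hF.range_subset_closure_image_dense
    (dense_setOf_mul_int_div_pow two_pi_pos one_lt_two) (mem_range_self θ)

theorem stmt9 :
    {p : ℝ × ℝ | |(|p.1| - |p.2|)| ≤ 2 ∧ 2 ≤ |p.1| + |p.2|} ⊆
      closure (⋃ (n : ℕ) (j : ℤ),
        {p : ℝ × ℝ | 4 - p.2 ^ 2 + p.1 ^ 2 - 4 * p.1 * Real.cos (2 * Real.pi * j / 2 ^ n) = 0}) := by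
  rintro ⟨α, β⟩ ⟨hdiff, hsum⟩
  obtain ⟨θ, hθ⟩ := exists_sq_eq_sub_cos hdiff hsum
  exact mem_closure_dyadicAngleCurves hθ
end

section
/- Let G be a countable group acting by measure class preserving transformations on a probability space (X, μ), and for each x ∈ X let ρ_x denote the quasi-regular representation of G on ℓ²(G·x) given by (ρ_x(g)f)(y) = f(g⁻¹y). Suppose m ∈ ℂ[G] and x, y ∈ X are such that for every r ∈ ℕ there exist points u ∈ G·x and v ∈ G·y with B_r(u) isomorphic (as rooted marked graph) to B_r(y) and B_r(v) isomorphic to B_r(x), where B_r is taken with respect to the generators in the support of m and a fixed enumeration of G. Then σ(ρ_x(m)) = σ(ρ_y(m)). -/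
/-- Isomorphism of the rooted marked balls of radius `r` (with respect to the enumeration `s`
of the group and the marking generators in `gen`) around `x` and `y`. -/
def BallIso {G X : Type*} [Group G] [MulAction G X] (s : ℕ → G) (gen : Set G)
    (r : ℕ) (x y : X) : Prop :=
  ∃ ψ : X → X,
    Set.BijOn ψ {z | ∃ i ≤ r, z = s i • x} {z | ∃ i ≤ r, z = s i • y} ∧
    ψ x = y ∧
    ∀ u ∈ {z | ∃ i ≤ r, z = s i • x}, ∀ v ∈ {z | ∃ i ≤ r, z = s i • x},
      ∀ g ∈ gen, (v = g • u ↔ ψ v = g • ψ u)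

/-! If every finite piece of the marked orbital graph of `x` embeds into that of `y`, a finitely
supported vector on `G • x` can be transplanted to `G • y`. Since `λ - ρ(m)` and its adjoint only
look one edge ahead, the transplant preserves the norms of the vector and of its images under
these operators. So lower bounds for `λ - ρ_y(m)` and its adjoint pass, by density, to
`λ - ρ_x(m)` and its adjoint; on a Hilbert space an operator is invertible iff it and its
adjoint are bounded below, hence `σ(ρ_x(m)) ⊆ σ(ρ_y(m))`, and the hypothesis is symmetric. -/

open scoped InnerProductSpace InnerProduct Pointwise NNReal ENNReal ComplexConjugate
open Function Set MulAction

namespace lp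

variable {α β E : Type*} [NormedAddCommGroup E] {p : ℝ≥0∞}

theorem le_mul_norm_of_finite_support [Fact (1 ≤ p)] (hp : p ≠ ⊤) {F : Type*}
    [NormedAddCommGroup F] {T : lp (fun _ : α => E) p → F} (hT : Continuous T) {K : ℝ}
    (h : ∀ f : lp (fun _ : α => E) p, (support f).Finite → ‖f‖ ≤ K * ‖T f‖)
    (f : lp (fun _ : α => E) p) : ‖f‖ ≤ K * ‖T f‖ := by
  classical
  have hclosed : IsClosed {f : lp (fun _ : α => E) p | ‖f‖ ≤ K * ‖T f‖} :=
    isClosed_le (by fun_prop) (by fun_prop)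
  refine hclosed.mem_of_tendsto (lp.hasSum_single hp f) (Filter.Eventually.of_forall fun s => ?_)
  refine h _ ((s.finite_toSet).subset fun i hi => ?_)
  by_contra his
  refine hi ?_
  rw [lp.coeFn_sum, Finset.sum_apply]
  exact Finset.sum_eq_zero fun i' hi' =>
    lp.single_apply_ne p i' _ (ne_of_mem_of_not_mem hi' his).symm

theorem norm_eq_of_injOn (hp : 0 < p.toReal) {j : α → β} {A : Set α} (hj : InjOn j A)
    {V : lp (fun _ : α => E) p} {W : lp (fun _ : β => E) p} (hV : support V ⊆ A)
    (hVW : ∀ z ∈ A, W (j z) = V z) (hW : support W ⊆ j '' A) : ‖W‖ = ‖V‖ := by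
  rw [lp.norm_eq_tsum_rpow hp, lp.norm_eq_tsum_rpow hp]
  have hne : ∀ x : E, ‖x‖ ^ p.toReal ≠ 0 → x ≠ 0 := fun x hx h => hx (by simp [h, hp.ne'])
  have hW' : support (fun w => ‖W w‖ ^ p.toReal) ⊆ j '' A := fun w hw => hW (hne _ hw)
  have hV' : support (fun z => ‖V z‖ ^ p.toReal) ⊆ A := fun z hz => hV (hne _ hz)
  congr 1
  calc ∑' w, ‖W w‖ ^ p.toReal = ∑' w : j '' A, ‖W w‖ ^ p.toReal :=
        (tsum_subtype_eq_of_support_subset hW').symm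
    _ = ∑' z : A, ‖W (j z)‖ ^ p.toReal := tsum_image (fun w => ‖W w‖ ^ p.toReal) hj
    _ = ∑' z : A, ‖V z‖ ^ p.toReal := tsum_congr fun z => by rw [hVW z z.2]
    _ = ∑' z, ‖V z‖ ^ p.toReal := tsum_subtype_eq_of_support_subset hV'

theorem exists_apply_comp_eq {j : α → β} {P : Set α} (hj : InjOn j P)
    {f : lp (fun _ : α => E) p} (hf : (support f).Finite) :
    ∃ F : lp (fun _ : β => E) p, (∀ z ∈ P, F (j z) = f z) ∧ support F ⊆ j '' support f := by
  set F : β → E := extend (P.domRestrict j) (P.domRestrict f) 0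
  have hFj : ∀ z ∈ P, F (j z) = f z := fun z hz =>
    (injOn_iff_injective.mp hj).extend_apply _ _ ⟨z, hz⟩
  have hFs : support F ⊆ j '' support f := by
    intro w hw
    by_cases h : ∃ z : P, P.domRestrict j z = w
    · obtain ⟨⟨z, hz⟩, rfl⟩ := h
      refine ⟨z, ?_, rfl⟩
      rw [mem_support, ← hFj z hz]
      exact hw
    · exact absurd (extend_apply' _ _ _ h) hw
  exact ⟨⟨F, (memℓp_zero ((hf.image j).subset hFs)).of_exponent_ge bot_le⟩, hFj, hFs⟩

end lp

theorem ContinuousLinearMap.isUnit_iff_antilipschitz_and_antilipschitz_adjoint {𝕜 H : Type*}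
    [RCLike 𝕜] [NormedAddCommGroup H] [InnerProductSpace 𝕜 H] [CompleteSpace H] (T : H →L[𝕜] H) :
    IsUnit T ↔ (∃ K, AntilipschitzWith K T) ∧ ∃ K, AntilipschitzWith K (T†) := by
  have bij_iff := fun S : H →L[𝕜] H => S.bijective_iff_dense_range_and_antilipschitz
  rw [isUnit_iff_bijective]
  refine ⟨fun h => ⟨((bij_iff T).mp h).2, ?_⟩, fun ⟨hT, K, hK⟩ => (bij_iff T).mpr ⟨?_, hT⟩⟩
  · rw [← star_eq_adjoint]
    exact ((bij_iff _).mp (isUnit_iff_bijective.mp (isUnit_iff_bijective.mpr h).star)).2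
  · rw [← Submodule.orthogonal_orthogonal_eq_closure, orthogonal_range,
      LinearMap.ker_eq_bot_of_injective hK.injective, Submodule.bot_orthogonal_eq_top]

section MarkedEmbedding

variable {G α β : Type*} [Group G] [MulAction G α] [MulAction G β]

/-- `j` is an isomorphism from the subgraph induced on `P` of the orbital graph of `α`, with
edges `u → g • u` marked by `g ∈ L`, onto the corresponding induced subgraph for `β`. -/
structure IsMarkedEmbeddingOn (L : Set G) (j : α → β) (P : Set α) : Prop where
  injOn : InjOn j P
  smul_eq_iff : ∀ g ∈ L, ∀ u ∈ P, ∀ w ∈ P, w = g • u ↔ j w = g • j u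

def LocallyEmbeds (L : Set G) (α β : Type*) [MulAction G α] [MulAction G β] : Prop :=
  ∀ P : Set α, P.Finite → ∃ j : α → β, IsMarkedEmbeddingOn L j P

variable {L : Set G} {j : α → β} {P : Set α}

theorem IsMarkedEmbeddingOn.inv (h : IsMarkedEmbeddingOn L j P) :
    IsMarkedEmbeddingOn L⁻¹ j P where
  injOn := h.injOn
  smul_eq_iff g hg u hu w hw := by
    have := h.smul_eq_iff g⁻¹ hg w hw u hu
    rwa [eq_inv_smul_iff, eq_inv_smul_iff, eq_comm, eq_comm (a := g • j u)] at this

theorem LocallyEmbeds.inv (h : LocallyEmbeds L α β) : LocallyEmbeds L⁻¹ α β :=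
  fun P hP => (h P hP).imp fun _ hj => hj.inv

theorem IsMarkedEmbeddingOn.inv_smul_image_subset (h : IsMarkedEmbeddingOn L j P) {g : G}
    (hg : g ∈ L) {S : Set α} (hS : S ⊆ P) (hgS : g⁻¹ • S ⊆ P) :
    g⁻¹ • (j '' S) ⊆ j '' (g⁻¹ • S) := by
  intro w hw
  obtain ⟨z, hz, hzw⟩ := mem_inv_smul_set_iff.mp hw
  have hz' : g⁻¹ • z ∈ g⁻¹ • S := smul_mem_smul_set hz
  refine ⟨g⁻¹ • z, hz', smul_left_cancel g ?_⟩
  rw [← hzw]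
  exact ((h.smul_eq_iff g hg _ (hgS hz') z (hS hz)).mp (smul_inv_smul g z).symm).symm

theorem IsMarkedEmbeddingOn.apply_smul_eq {E : Type*} [Zero E] (h : IsMarkedEmbeddingOn L j P)
    {f : α → E} {F : β → E} (hfP : support f ⊆ P) (hF : ∀ z ∈ P, F (j z) = f z)
    (hFs : support F ⊆ j '' support f) {g : G} (hg : g ∈ L) {z : α} (hz : z ∈ P) :
    F (g • j z) = f (g • z) := by
  by_cases hgz : g • z ∈ P
  · rw [← hF _ hgz, (h.smul_eq_iff g hg z hz _ hgz).mp rfl]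
  · rw [notMem_support.mp fun h' => hgz (hfP h'), ← notMem_support]
    intro hne
    obtain ⟨z', hz', hjz'⟩ := hFs hne
    exact hgz ((h.smul_eq_iff g hg z hz z' (hfP hz')).mpr hjz' ▸ hfP hz')

end MarkedEmbedding

section Orbit

variable {G X : Type*} [Group G] [MulAction G X] {s : ℕ → G} {x y : X}

theorem exists_forall_mem_ball_of_finite (hs : Surjective s) {P : Set (orbit G x)}
    (hP : P.Finite) : ∃ r, ∀ z ∈ P, ∃ i ≤ r, (z : X) = s i • x := by
  have hidx : ∀ z : orbit G x, ∃ i, s i • x = z := fun z =>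
    let ⟨g, hg⟩ := z.2
    (hs g).imp fun i hi => by rw [hi]; exact hg
  choose idx hidx using hidx
  obtain ⟨r, hr⟩ := (hP.image idx).bddAbove
  exact ⟨r, fun z hz => ⟨idx z, hr (mem_image_of_mem idx hz), (hidx z).symm⟩⟩

theorem locallyEmbeds_orbit_of_ballIso (hs : Surjective s) {gen : Set G}
    (h : ∀ r, ∃ v ∈ orbit G y, BallIso s gen r x v) :
    LocallyEmbeds gen (orbit G x) (orbit G y) := by
  classical
  intro P hP
  obtain ⟨r, hr⟩ := exists_forall_mem_ball_of_finite hs hP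
  obtain ⟨v, hv, ψ, hψ, -, hedge⟩ := h r
  have hψy : ∀ z ∈ P, ψ z ∈ orbit G y := fun z hz => by
    obtain ⟨i, -, hi⟩ : ∃ i ≤ r, ψ z = s i • v := hψ.mapsTo (hr z hz)
    exact hi ▸ mem_orbit_of_mem_orbit (s i) hv
  let j : orbit G x → orbit G y := fun z =>
    if h : ψ z ∈ orbit G y then ⟨ψ z, h⟩ else ⟨y, mem_orbit_self y⟩
  have hj : ∀ z ∈ P, (j z : X) = ψ z := fun z hz => by simp only [j, dif_pos (hψy z hz)]
  refine ⟨j, fun z hz z' hz' hzz' => Subtype.ext (hψ.injOn (hr z hz) (hr z' hz') ?_),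
    fun g hg u hu w hw => ?_⟩
  · rw [← hj z hz, ← hj z' hz', hzz']
  · rw [Subtype.ext_iff, Subtype.ext_iff, orbit.coe_smul, orbit.coe_smul, hj u hu, hj w hw]
    exact hedge _ (hr u hu) _ (hr w hw) g hg

end Orbit

section TranslationCombination

variable {𝕜 G α β ι : Type*} [RCLike 𝕜] [Group G] [MulAction G α] [MulAction G β]

/-- In terms of the quasi-regular representation `ρ`, this says `T = a + ∑ i ∈ t, c i • ρ (k i)⁻¹`;
`λ - ρ(m)` is the case `a = λ`, `t = supp m`, `c = -m`, `k = (·⁻¹)`. -/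
def IsTranslationCombination (a : 𝕜) (t : Finset ι) (c : ι → 𝕜) (k : ι → G)
    (T : lp (fun _ : α => 𝕜) 2 →L[𝕜] lp (fun _ : α => 𝕜) 2) : Prop :=
  ∀ f z, T f z = a * f z + ∑ i ∈ t, c i * f (k i • z)

variable {a : 𝕜} {t : Finset ι} {c : ι → 𝕜} {k : ι → G}
  {T : lp (fun _ : α => 𝕜) 2 →L[𝕜] lp (fun _ : α => 𝕜) 2}
  {S : lp (fun _ : β => 𝕜) 2 →L[𝕜] lp (fun _ : β => 𝕜) 2}

namespace IsTranslationCombination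

theorem algebraMap_sub (hT : IsTranslationCombination a t c k T) (μ : 𝕜) :
    IsTranslationCombination (μ - a) t (-c) k (algebraMap 𝕜 _ μ - T) := by
  intro f z
  simp only [sub_apply, lp.coeFn_sub, Pi.sub_apply, hT f z,
    Algebra.algebraMap_eq_smul_one, smul_apply, one_apply_eq_self,
    lp.coeFn_smul, Pi.smul_apply, smul_eq_mul, Pi.neg_apply, neg_mul, Finset.sum_neg_distrib]
  ring

theorem apply_single [DecidableEq α] (hT : IsTranslationCombination a t c k T) (z : α) :
    T (lp.single 2 z 1) = a • lp.single 2 z 1 + ∑ i ∈ t, c i • lp.single 2 ((k i)⁻¹ • z) 1 := by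
  refine lp.ext (funext fun w => ?_)
  rw [hT, lp.coeFn_add, Pi.add_apply, lp.coeFn_sum, Finset.sum_apply]
  simp [Pi.single_apply, eq_inv_smul_iff]

theorem adjoint (hT : IsTranslationCombination a t c k T) :
    IsTranslationCombination (conj a) t (fun i => conj (c i)) (fun i => (k i)⁻¹) (T†) := by
  classical
  intro f z
  have hδ : ∀ (w : α) (g : lp (fun _ : α => 𝕜) 2), g w = ⟪lp.single 2 w (1 : 𝕜), g⟫_𝕜 :=
    fun w g => by simp [lp.inner_single_left]
  rw [hδ, ContinuousLinearMap.adjoint_inner_right, hT.apply_single, inner_add_left, sum_inner]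
  simp only [inner_smul_left, ← hδ]

theorem support_apply_subset (hT : IsTranslationCombination a t c k T)
    (f : lp (fun _ : α => 𝕜) 2) :
    support (T f) ⊆ support f ∪ ⋃ i ∈ t, (k i)⁻¹ • support f := by
  intro z hz
  by_cases h0 : f z = 0
  · rw [mem_support, hT, h0, mul_zero, zero_add] at hz
    obtain ⟨i, hi, hne⟩ := Finset.exists_ne_zero_of_sum_ne_zero hz
    exact Or.inr (mem_iUnion₂.mpr ⟨i, hi, mem_inv_smul_set_iff.mpr (right_ne_zero_of_mul hne)⟩)
  · exact Or.inl h0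

theorem antilipschitzWith_of_locallyEmbeds (hT : IsTranslationCombination a t c k T)
    (hS : IsTranslationCombination a t c k S) {L : Set G} (hL : LocallyEmbeds L α β)
    (hk : ∀ i ∈ t, k i ∈ L) {K : ℝ≥0} (hSK : AntilipschitzWith K S) : AntilipschitzWith K T := by
  refine T.antilipschitz_of_bound
    (lp.le_mul_norm_of_finite_support (by norm_num) T.continuous fun f hf => ?_)
  set N := support f ∪ ⋃ i ∈ t, (k i)⁻¹ • support f
  have hfN : support f ⊆ N := subset_union_left
  have hkN : ∀ i ∈ t, (k i)⁻¹ • support f ⊆ N := fun i hi => subset_union_of_subset_right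
    (subset_iUnion₂ (s := fun i (_ : i ∈ t) => (k i)⁻¹ • support f) i hi) _
  obtain ⟨j, hj⟩ := hL N (hf.union (t.finite_toSet.biUnion fun i _ => hf.smul_set))
  obtain ⟨F, hFf, hFs⟩ := lp.exists_apply_comp_eq hj.injOn hf
  have hSF : ∀ z ∈ N, S F (j z) = T f z := fun z hz => by
    rw [hS, hT, hFf z hz]
    congr 1
    exact Finset.sum_congr rfl fun i hi => by rw [hj.apply_smul_eq hfN hFf hFs (hk i hi) hz]
  have hSFs : support (S F) ⊆ j '' N := by
    refine (hS.support_apply_subset F).trans (union_subset (hFs.trans (image_mono hfN)) ?_)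
    refine iUnion₂_subset fun i hi => (smul_set_mono hFs).trans ?_
    exact (hj.inv_smul_image_subset (hk i hi) hfN (hkN i hi)).trans (image_mono (hkN i hi))
  calc ‖f‖ = ‖F‖ :=
        (lp.norm_eq_of_injOn (by norm_num) hj.injOn hfN hFf (hFs.trans (image_mono hfN))).symm
    _ ≤ K * ‖S F‖ := S.bound_of_antilipschitz hSK F
    _ = K * ‖T f‖ := by
      rw [lp.norm_eq_of_injOn (by norm_num) hj.injOn (hT.support_apply_subset f) hSF hSFs]

theorem spectrum_subset (hT : IsTranslationCombination a t c k T)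
    (hS : IsTranslationCombination a t c k S) {L : Set G} (hL : LocallyEmbeds L α β)
    (hk : ∀ i ∈ t, k i ∈ L) : spectrum 𝕜 T ⊆ spectrum 𝕜 S := by
  intro μ
  rw [← not_imp_not, spectrum.notMem_iff, spectrum.notMem_iff,
    ContinuousLinearMap.isUnit_iff_antilipschitz_and_antilipschitz_adjoint,
    ContinuousLinearMap.isUnit_iff_antilipschitz_and_antilipschitz_adjoint]
  rintro ⟨⟨K₁, hK₁⟩, ⟨K₂, hK₂⟩⟩
  refine ⟨⟨K₁, ?_⟩, ⟨K₂, ?_⟩⟩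
  · exact (hT.algebraMap_sub μ).antilipschitzWith_of_locallyEmbeds
      (hS.algebraMap_sub μ) hL hk hK₁
  · exact (hT.algebraMap_sub μ).adjoint.antilipschitzWith_of_locallyEmbeds
      (hS.algebraMap_sub μ).adjoint hL.inv (fun i hi => inv_mem_inv.mpr (hk i hi)) hK₂

end IsTranslationCombination

end TranslationCombination

theorem stmt15_general {G X : Type*} [Group G] [MulAction G X]
    (m : G →₀ ℂ) (x y : X)
    (s : ℕ → G) (hs : Function.Surjective s)
    (hloc : ∀ r : ℕ,
      (∃ u ∈ MulAction.orbit G x, BallIso s (↑m.support) r y u) ∧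
      (∃ v ∈ MulAction.orbit G y, BallIso s (↑m.support) r x v))
    (Mx : lp (fun _ : MulAction.orbit G x => ℂ) 2 →L[ℂ] lp (fun _ : MulAction.orbit G x => ℂ) 2)
    (My : lp (fun _ : MulAction.orbit G y => ℂ) 2 →L[ℂ] lp (fun _ : MulAction.orbit G y => ℂ) 2)
    (hMx : ∀ (f : lp (fun _ : MulAction.orbit G x => ℂ) 2) (z : MulAction.orbit G x),
      (Mx f : ∀ _ : MulAction.orbit G x, ℂ) z =
        ∑ g ∈ m.support, m g * (f : ∀ _ : MulAction.orbit G x, ℂ) (g⁻¹ • z))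
    (hMy : ∀ (f : lp (fun _ : MulAction.orbit G y => ℂ) 2) (z : MulAction.orbit G y),
      (My f : ∀ _ : MulAction.orbit G y, ℂ) z =
        ∑ g ∈ m.support, m g * (f : ∀ _ : MulAction.orbit G y, ℂ) (g⁻¹ • z)) :
    spectrum ℂ Mx = spectrum ℂ My := by
  have hx : IsTranslationCombination 0 m.support m (·⁻¹) Mx := fun f z => by
    simp only [hMx, zero_mul, zero_add]
  have hy : IsTranslationCombination 0 m.support m (·⁻¹) My := fun f z => by
    simp only [hMy, zero_mul, zero_add]
  have hk : ∀ g ∈ m.support, g⁻¹ ∈ (m.support : Set G)⁻¹ := fun g hg => inv_mem_inv.mpr hg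
  have hxy := (locallyEmbeds_orbit_of_ballIso hs fun r => (hloc r).2).inv
  have hyx := (locallyEmbeds_orbit_of_ballIso hs fun r => (hloc r).1).inv
  exact (hx.spectrum_subset hy hxy hk).antisymm (hy.spectrum_subset hx hyx hk)

theorem stmt15 {G X : Type*} [Group G] [Countable G] [MulAction G X]
    (m : G →₀ ℂ) (x y : X)
    (s : ℕ → G) (hs : Function.Surjective s) (hs0 : s 0 = 1)
    (hloc : ∀ r : ℕ,
      (∃ u ∈ MulAction.orbit G x, BallIso s (↑m.support) r y u) ∧
      (∃ v ∈ MulAction.orbit G y, BallIso s (↑m.support) r x v))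
    (Mx : lp (fun _ : MulAction.orbit G x => ℂ) 2 →L[ℂ] lp (fun _ : MulAction.orbit G x => ℂ) 2)
    (My : lp (fun _ : MulAction.orbit G y => ℂ) 2 →L[ℂ] lp (fun _ : MulAction.orbit G y => ℂ) 2)
    (hMx : ∀ (f : lp (fun _ : MulAction.orbit G x => ℂ) 2) (z : MulAction.orbit G x),
      (Mx f : ∀ _ : MulAction.orbit G x, ℂ) z =
        ∑ g ∈ m.support, m g * (f : ∀ _ : MulAction.orbit G x, ℂ) (g⁻¹ • z))
    (hMy : ∀ (f : lp (fun _ : MulAction.orbit G y => ℂ) 2) (z : MulAction.orbit G y),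
      (My f : ∀ _ : MulAction.orbit G y, ℂ) z =
        ∑ g ∈ m.support, m g * (f : ∀ _ : MulAction.orbit G y, ℂ) (g⁻¹ • z)) :
    spectrum ℂ Mx = spectrum ℂ My :=
  stmt15_general m x y s hs hloc Mx My hMx hMy
end
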